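/- arXiv:1908.04432 — 2 statements merged into one kernel-verified Lean document; each statement's English description precedes it below -/
import Mathlib

section
/- For probability mass functions Q1 and Q2 on a finite nonempty type Y, objective compatibility holds if and only if subjective compatibility holds. -/
/-- A probability mass function on a finite type: nonnegative and summing to 1. -/
def IsPmf {Z : Type} [Fintype Z] (P : Z → ℝ) : Prop :=
  (∀ z, 0 ≤ P z) ∧ ∑ z, P z = 1

/-- Objective compatibility of two probability assignments `Q1`, `Q2` on `Y`. -/
def ObjCompatible {Y : Type} [Fintype Y] (Q1 Q2 : Y → ℝ) : Prop :=
  ∃ (X1 : Type) (_ : Fintype X1) (X2 : Type) (_ : Fintype X2),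
    Nonempty X1 ∧ Nonempty X2 ∧
    ∃ (P : Y × X1 × X2 → ℝ) (x1 : X1) (x2 : X2),
      IsPmf P ∧
      0 < ∑ y, P (y, x1, x2) ∧
      (∀ y, Q1 y = (∑ x2', P (y, x1, x2')) / (∑ y', ∑ x2', P (y', x1, x2'))) ∧
      (∀ y, Q2 y = (∑ x1', P (y, x1', x2)) / (∑ y', ∑ x1', P (y', x1', x2)))

/-- Subjective compatibility of two probability assignments `Q1`, `Q2` on `Y`. -/
def SubjCompatible {Y : Type} [Fintype Y] (Q1 Q2 : Y → ℝ) : Prop :=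
  ∃ (X : Type) (_ : Fintype X),
    Nonempty X ∧
    ∃ K : Y → X → ℝ,
      (∀ y x, 0 ≤ K y x) ∧
      (∀ y, ∑ x, K y x = 1) ∧
      (∀ x, 0 < ∑ y, K y x * Q1 y ∧ 0 < ∑ y, K y x * Q2 y) ∧
      ∃ xt : X, ∀ y,
        (K y xt * Q1 y) / (∑ y', K y' xt * Q1 y') =
        (K y xt * Q2 y) / (∑ y', K y' xt * Q2 y')
/-!
Both notions amount to `Q1` and `Q2` giving positive mass to a common point. An objective
witness `P` has `P (y, x1, x2) > 0` for some `y`, which makes both conditionals positive at `y`;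
a subjective witness has a positive posterior at some `y`, and equality of the posteriors forces
`Q2 y > 0` there too. Conversely, a common point yields explicit witnesses over `Bool`.
-/

open Finset

lemma div_sum_sum_pos {A B : Type} [Fintype A] [Fintype B] {f : A → B → ℝ}
    (hf : ∀ a b, 0 ≤ f a b) {a : A} {b : B} (h : 0 < f a b) :
    0 < (∑ b', f a b') / ∑ a', ∑ b', f a' b' := by
  have hrow : 0 < ∑ b', f a b' := sum_pos' (fun b' _ => hf a b') ⟨b, mem_univ b, h⟩
  exact div_pos hrow <|
    sum_pos' (fun a' _ => sum_nonneg fun b' _ => hf a' b') ⟨a, mem_univ a, hrow⟩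

lemma exists_pos_of_sum_pos {Y : Type} [Fintype Y] {f : Y → ℝ} (h : 0 < ∑ y, f y) :
    ∃ y, 0 < f y := by
  obtain ⟨y, -, hy⟩ := exists_lt_of_sum_lt (s := univ) (f := 0) (g := f) (by simpa using h)
  exact ⟨y, hy⟩

section

variable {Y : Type} {Q1 Q2 : Y → ℝ}

/-- The overlap `m = min Q1 Q2 / 2` sits at `(true, true)` and again at `(false, false)`, so the
rows `x1 = true` and `x2 = true` carry `Q1 / 2` and `Q2 / 2` and the total mass is
`(∑ Q1 + ∑ Q2) / 2`. -/
noncomputable def overlapCoupling (Q1 Q2 : Y → ℝ) : Y × Bool × Bool → ℝ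
  | (y, true, true) => min (Q1 y) (Q2 y) / 2
  | (y, true, false) => Q1 y / 2 - min (Q1 y) (Q2 y) / 2
  | (y, false, true) => Q2 y / 2 - min (Q1 y) (Q2 y) / 2
  | (y, false, false) => min (Q1 y) (Q2 y) / 2

lemma sum_overlapCoupling_true_left (y : Y) :
    ∑ b, overlapCoupling Q1 Q2 (y, true, b) = Q1 y / 2 := by
  simp [overlapCoupling]

lemma sum_overlapCoupling_true_right (y : Y) :
    ∑ b, overlapCoupling Q1 Q2 (y, b, true) = Q2 y / 2 := by
  simp [overlapCoupling]

/-- The posterior at `true` is the point mass at `y0` whatever the prior; the weight `1/2`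
leaves both outcomes positive probability. -/
noncomputable def halfIndicatorKernel [DecidableEq Y] (y0 : Y) : Y → Bool → ℝ
  | y, true => if y = y0 then 1 / 2 else 0
  | y, false => if y = y0 then 1 / 2 else 1

lemma halfIndicatorKernel_false [DecidableEq Y] (y0 y : Y) :
    halfIndicatorKernel y0 y false = 1 - halfIndicatorKernel y0 y true := by
  simp only [halfIndicatorKernel]
  split_ifs <;> norm_num

variable [Fintype Y]

theorem ObjCompatible.exists_pos (h : ObjCompatible Q1 Q2) : ∃ y, 0 < Q1 y ∧ 0 < Q2 y := by
  obtain ⟨X1, _, X2, _, -, -, P, x1, x2, ⟨hP, -⟩, hpos, hQ1, hQ2⟩ := h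
  obtain ⟨y, hy⟩ := exists_pos_of_sum_pos hpos
  refine ⟨y, ?_, ?_⟩
  · rw [hQ1 y]
    exact div_sum_sum_pos (f := fun y x2' => P (y, x1, x2')) (fun _ _ => hP _) hy
  · rw [hQ2 y]
    exact div_sum_sum_pos (f := fun y x1' => P (y, x1', x2)) (fun _ _ => hP _) hy

theorem SubjCompatible.exists_pos (h : SubjCompatible Q1 Q2) : ∃ y, 0 < Q1 y ∧ 0 < Q2 y := by
  obtain ⟨X, _, -, K, hK, -, hpos, xt, hpost⟩ := h
  obtain ⟨hZ1, hZ2⟩ := hpos xt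
  obtain ⟨y, hy⟩ := exists_pos_of_sum_pos hZ1
  have hKy : 0 < K y xt := (hK y xt).lt_of_ne fun h0 => by simp [← h0] at hy
  have hpost2 : 0 < K y xt * Q2 y / ∑ y', K y' xt * Q2 y' := hpost y ▸ div_pos hy hZ1
  exact ⟨y, pos_of_mul_pos_right hy hKy.le,
    pos_of_mul_pos_right ((div_pos_iff_of_pos_right hZ2).1 hpost2) hKy.le⟩

lemma isPmf_overlapCoupling (hQ1 : IsPmf Q1) (hQ2 : IsPmf Q2) :
    IsPmf (overlapCoupling Q1 Q2) := by
  have hm : ∀ y, 0 ≤ min (Q1 y) (Q2 y) := fun y => le_min (hQ1.1 y) (hQ2.1 y)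
  refine ⟨?_, ?_⟩
  · rintro ⟨y, _ | _, _ | _⟩ <;> simp only [overlapCoupling]
    all_goals linarith [hm y, min_le_left (Q1 y) (Q2 y), min_le_right (Q1 y) (Q2 y)]
  · have hrow : ∀ y, ∑ b : Bool × Bool, overlapCoupling Q1 Q2 (y, b) = (Q1 y + Q2 y) / 2 := by
      intro y
      simp only [Fintype.sum_prod_type, Fintype.sum_bool, overlapCoupling]
      ring
    rw [Fintype.sum_prod_type, sum_congr rfl fun y _ => hrow y, ← sum_div, sum_add_distrib,
      hQ1.2, hQ2.2]
    norm_num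

theorem objCompatible_of_exists_pos (hQ1 : IsPmf Q1) (hQ2 : IsPmf Q2)
    (h : ∃ y, 0 < Q1 y ∧ 0 < Q2 y) : ObjCompatible Q1 Q2 := by
  obtain ⟨y0, h1, h2⟩ := h
  have hsum (Q : Y → ℝ) (hQ : IsPmf Q) : ∑ y, Q y / 2 = 1 / 2 := by rw [← sum_div, hQ.2]
  refine ⟨Bool, inferInstance, Bool, inferInstance, ⟨true⟩, ⟨true⟩, overlapCoupling Q1 Q2,
    true, true, isPmf_overlapCoupling hQ1 hQ2, ?_, fun y => ?_, fun y => ?_⟩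
  · exact sum_pos' (fun y _ => div_nonneg (le_min (hQ1.1 y) (hQ2.1 y)) two_pos.le)
      ⟨y0, mem_univ y0, half_pos (lt_min h1 h2)⟩
  · simp only [sum_overlapCoupling_true_left, hsum Q1 hQ1]
    ring
  · simp only [sum_overlapCoupling_true_right, hsum Q2 hQ2]
    ring

section Kernel

variable [DecidableEq Y] (y0 : Y) (Q : Y → ℝ)

lemma sum_halfIndicatorKernel_true_mul :
    ∑ y, halfIndicatorKernel y0 y true * Q y = Q y0 / 2 := by
  simp only [halfIndicatorKernel, ite_mul, zero_mul, sum_ite_eq', mem_univ, if_true]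
  ring

lemma sum_halfIndicatorKernel_false_mul (hQ : ∑ y, Q y = 1) :
    ∑ y, halfIndicatorKernel y0 y false * Q y = 1 - Q y0 / 2 := by
  simp only [halfIndicatorKernel_false, sub_mul, one_mul, sum_sub_distrib, hQ,
    sum_halfIndicatorKernel_true_mul]

lemma halfIndicatorKernel_posterior_true (hQ : Q y0 ≠ 0) (y : Y) :
    halfIndicatorKernel y0 y true * Q y / ∑ y', halfIndicatorKernel y0 y' true * Q y' =
      if y = y0 then 1 else 0 := by
  rw [sum_halfIndicatorKernel_true_mul]
  by_cases hy : y = y0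
  · subst hy
    simp only [halfIndicatorKernel, if_true]
    field_simp
  · simp [halfIndicatorKernel, hy]

end Kernel

theorem subjCompatible_of_exists_pos (hQ1 : IsPmf Q1) (hQ2 : IsPmf Q2)
    (h : ∃ y, 0 < Q1 y ∧ 0 < Q2 y) : SubjCompatible Q1 Q2 := by
  classical
  obtain ⟨y0, h1, h2⟩ := h
  have hpos (Q : Y → ℝ) (hQ : IsPmf Q) (hy0 : 0 < Q y0) (b : Bool) :
      0 < ∑ y, halfIndicatorKernel y0 y b * Q y := by
    have hle : Q y0 ≤ 1 := hQ.2 ▸ single_le_sum (fun y _ => hQ.1 y) (mem_univ y0)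
    cases b
    · rw [sum_halfIndicatorKernel_false_mul y0 Q hQ.2]; linarith
    · rw [sum_halfIndicatorKernel_true_mul]; linarith
  refine ⟨Bool, inferInstance, ⟨true⟩, halfIndicatorKernel y0, ?_, ?_,
    fun b => ⟨hpos Q1 hQ1 h1 b, hpos Q2 hQ2 h2 b⟩, true, fun y => ?_⟩
  · intro y b
    cases b <;> simp only [halfIndicatorKernel] <;> split_ifs <;> norm_num
  · intro y
    rw [Fintype.sum_bool, halfIndicatorKernel_false]
    ring
  · rw [halfIndicatorKernel_posterior_true y0 Q1 h1.ne',
      halfIndicatorKernel_posterior_true y0 Q2 h2.ne']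

end

theorem objCompatible_iff_subjCompatible_general
    {Y : Type} [Fintype Y] (Q1 Q2 : Y → ℝ)
    (hQ1 : IsPmf Q1) (hQ2 : IsPmf Q2) :
    ObjCompatible Q1 Q2 ↔ SubjCompatible Q1 Q2 :=
  ⟨fun h => subjCompatible_of_exists_pos hQ1 hQ2 h.exists_pos,
    fun h => objCompatible_of_exists_pos hQ1 hQ2 h.exists_pos⟩

/-- For pmfs on a finite nonempty type, objective and subjective compatibility
are equivalent. -/
theorem objCompatible_iff_subjCompatible
    {Y : Type} [Fintype Y] [Nonempty Y] (Q1 Q2 : Y → ℝ)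
    (hQ1 : IsPmf Q1) (hQ2 : IsPmf Q2) :
    ObjCompatible Q1 Q2 ↔ SubjCompatible Q1 Q2 :=
  objCompatible_iff_subjCompatible_general Q1 Q2 hQ1 hQ2
end

section
/- Let Y be a finite nonempty type and let Q1 be the uniform pmf on Y, i.e. Q1 y = 1 / |Y| for every y. Then Q1 is objectively compatible with every pmf Q2 on Y. -/
/-!
Let `X1` be a single point and `X2 = Bool`, and put mass `t * Q2 y` on `(y, true)` and
`Q1 y - t * Q2 y` on `(y, false)`. Summing out `X2` gives back `Q1`, while conditioning on
`X2 = true` gives `Q2`. This is a pmf as soon as `Q1` dominates a positive multiple `t * Q2`,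
and the uniform pmf dominates `Q2 / |Y|`.
-/

theorem IsPmf.le_one {Z : Type} [Fintype Z] {P : Z → ℝ} (hP : IsPmf P) (z : Z) : P z ≤ 1 :=
  hP.2 ▸ Finset.single_le_sum (fun i _ => hP.1 i) (Finset.mem_univ z)

theorem isPmf_uniform (Z : Type) [Fintype Z] [Nonempty Z] :
    IsPmf (fun _ : Z => 1 / (Fintype.card Z : ℝ)) := by
  refine ⟨fun _ => by positivity, ?_⟩
  rw [Finset.sum_const, Finset.card_univ, nsmul_eq_mul]
  field_simp

section Dominated

variable {Y : Type}

def dominatedJoint (t : ℝ) (Q1 Q2 : Y → ℝ) (p : Y × Unit × Bool) : ℝ :=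
  if p.2.2 then t * Q2 p.1 else Q1 p.1 - t * Q2 p.1

theorem sum_dominatedJoint_bool (t : ℝ) (Q1 Q2 : Y → ℝ) (y : Y) :
    ∑ b : Bool, dominatedJoint t Q1 Q2 (y, (), b) = Q1 y := by
  simp [dominatedJoint]

theorem sum_dominatedJoint_true [Fintype Y] (t : ℝ) (Q1 Q2 : Y → ℝ) (hQ2 : ∑ y, Q2 y = 1) :
    ∑ y, dominatedJoint t Q1 Q2 (y, (), true) = t := by
  simp [dominatedJoint, ← Finset.mul_sum, hQ2]

theorem isPmf_dominatedJoint [Fintype Y] {t : ℝ} {Q1 Q2 : Y → ℝ}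
    (hQ1 : IsPmf Q1) (hQ2 : IsPmf Q2) (ht : 0 < t) (hle : ∀ y, t * Q2 y ≤ Q1 y) :
    IsPmf (dominatedJoint t Q1 Q2) := by
  constructor
  · rintro ⟨y, _, b⟩
    cases b
    · exact sub_nonneg.mpr (hle y)
    · exact mul_nonneg ht.le (hQ2.1 y)
  · simp only [Fintype.sum_prod_type, Finset.univ_unique, Finset.sum_singleton,
      PUnit.default_eq_unit, sum_dominatedJoint_bool, hQ1.2]

theorem objCompatible_of_smul_le [Fintype Y] {t : ℝ} {Q1 Q2 : Y → ℝ}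
    (hQ1 : IsPmf Q1) (hQ2 : IsPmf Q2) (ht : 0 < t) (hle : ∀ y, t * Q2 y ≤ Q1 y) :
    ObjCompatible Q1 Q2 := by
  refine ⟨Unit, inferInstance, Bool, inferInstance, inferInstance, inferInstance,
    dominatedJoint t Q1 Q2, (), true, isPmf_dominatedJoint hQ1 hQ2 ht hle, ?_, fun y => ?_,
    fun y => ?_⟩
  · rwa [sum_dominatedJoint_true t Q1 Q2 hQ2.2]
  · simp only [sum_dominatedJoint_bool, hQ1.2, div_one]
  · simp only [Fintype.sum_unique, PUnit.default_eq_unit, sum_dominatedJoint_true t Q1 Q2 hQ2.2]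
    exact (mul_div_cancel_left₀ _ ht.ne').symm

end Dominated

/-- The uniform pmf on a finite nonempty type is objectively compatible with
every pmf. -/
theorem uniform_objCompatible
    {Y : Type} [Fintype Y] [Nonempty Y] (Q2 : Y → ℝ) (hQ2 : IsPmf Q2) :
    ObjCompatible (fun _ : Y => 1 / (Fintype.card Y : ℝ)) Q2 :=
  objCompatible_of_smul_le (isPmf_uniform Y) hQ2 (by positivity) fun y =>
    mul_le_of_le_one_right (by positivity) (hQ2.le_one y)
end
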